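/- Helstrom bound: for density matrices ρ₀, ρ₁ with priors π₀, π₁ ≥ 0, π₀ + π₁ = 1, and any two-outcome POVM (M₀, M₁) with M₀, M₁ ≥ 0, M₀ + M₁ = I, the error π₀Tr(M₁ρ₀) + π₁Tr(M₀ρ₁) is at least ½(1 − Tr|π₀ρ₀ − π₁ρ₁|), and this bound is attained by some POVM. -/

import Mathlib

open Matrix
open scoped ComplexOrder
noncomputable section

open Classical in
/-- `√A` for positive semidefinite `A` (junk value `0` otherwise). -/
noncomputable def matSqrt {d : ℕ} (A : Matrix (Fin d) (Fin d) ℂ) : Matrix (Fin d) (Fin d) ℂ :=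
  if h : A.PosSemidef then
    (h.1.eigenvectorUnitary : Matrix (Fin d) (Fin d) ℂ) *
      diagonal (((↑) : ℝ → ℂ) ∘ Real.sqrt ∘ h.1.eigenvalues) *
      (star h.1.eigenvectorUnitary : Matrix (Fin d) (Fin d) ℂ)
  else 0

/-- Trace norm `Tr|A| = Tr √(AᴴA)`. -/
noncomputable def traceNorm {d : ℕ} (A : Matrix (Fin d) (Fin d) ℂ) : ℝ :=
  ((matSqrt (Aᴴ * A)).trace).re

/-- Fidelity `F(ρ,σ) = Tr √(√ρ σ √ρ)`. -/
noncomputable def fidelity {d : ℕ} (ρ σ : Matrix (Fin d) (Fin d) ℂ) : ℝ :=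
  ((matSqrt (matSqrt ρ * σ * matSqrt ρ)).trace).re

/-- A density matrix: positive semidefinite with trace one. -/
def IsDensity {d : ℕ} (ρ : Matrix (Fin d) (Fin d) ℂ) : Prop :=
  ρ.PosSemidef ∧ ρ.trace = 1

lemma traceNorm_herm {d : ℕ} (Δ : Matrix (Fin d) (Fin d) ℂ) (hΔ : Δ.IsHermitian) :
    traceNorm Δ = ∑ i, |hΔ.eigenvalues i| := by
  set u : Matrix (Fin d) (Fin d) ℂ := ↑hΔ.eigenvectorUnitary with hu
  set e := hΔ.eigenvalues with he
  have hu1 : star u * u = 1 := mem_unitaryGroup_iff'.mp hΔ.eigenvectorUnitary.2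
  have key : ∀ X Y : Matrix (Fin d) (Fin d) ℂ,
      (u * X * star u) * (u * Y * star u) = u * (X * Y) * star u := by
    intro X Y
    simp only [mul_assoc]
    rw [← mul_assoc (star u) u, hu1, one_mul]
  set B : Matrix (Fin d) (Fin d) ℂ := u * diagonal ((↑) ∘ fun i => |e i|) * star u with hBdef
  have hDpsd : (diagonal ((↑) ∘ fun i => |e i| : Fin d → ℂ)).PosSemidef := by
    refine PosSemidef.diagonal fun i => ?_
    simp [Complex.zero_le_real, abs_nonneg]
  have hB : B.PosSemidef := by
    rw [hBdef, Matrix.star_eq_conjTranspose]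
    exact hDpsd.mul_mul_conjTranspose_same u
  have hspec : Δ = u * diagonal ((↑) ∘ e) * star u := by
    rw [hu, he]; exact hΔ.spectral_theorem
  have hBB : B ^ 2 = Δᴴ * Δ := by
    rw [hΔ.eq, sq, hBdef, key]
    conv_rhs => rw [hspec, key]
    rw [diagonal_mul_diagonal, diagonal_mul_diagonal]
    congr 1
    congr 1
    funext i
    simp only [Function.comp_apply, ← Complex.ofReal_mul, ← abs_mul, abs_mul_self]
  have hP : (Δᴴ * Δ).PosSemidef := posSemidef_conjTranspose_mul_self Δ
  have hsqrt : matSqrt (Δᴴ * Δ) = B := by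
    have h1 : matSqrt (Δᴴ * Δ) = cfc Real.sqrt (Δᴴ * Δ) := by
      rw [matSqrt, dif_pos hP, hP.1.cfc_eq, IsHermitian.cfc, Unitary.conjStarAlgAut_apply]; rfl
    have h2 : B = cfc (fun x : ℝ => |x|) Δ := by
      rw [hΔ.cfc_eq, IsHermitian.cfc, Unitary.conjStarAlgAut_apply]; rfl
    have h3 : Δᴴ * Δ = cfc (fun x : ℝ => x ^ 2) Δ := by
      rw [cfc_pow_id Δ 2 (show IsSelfAdjoint Δ from hΔ), hΔ.eq, sq]
    rw [h1, h3, ← cfc_comp Real.sqrt (fun x : ℝ => x ^ 2) Δ (show IsSelfAdjoint Δ from hΔ), h2]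
    exact cfc_congr (fun x _ => Real.sqrt_sq_eq_abs x)
  rw [traceNorm, hsqrt, hBdef, trace_mul_cycle, hu1, one_mul, trace_diagonal]
  simp

lemma psd_diag_re_nonneg {d : ℕ} {N : Matrix (Fin d) (Fin d) ℂ} (hN : N.PosSemidef) (i : Fin d) :
    0 ≤ (N i i).re := by
  have := hN.diag_nonneg (i := i)
  rw [Complex.le_def] at this
  simpa using this.1

/-- trace of `M * Δ` via the eigenbasis of hermitian `Δ`. -/
lemma retrace {d : ℕ} (Δ M : Matrix (Fin d) (Fin d) ℂ) (hΔ : Δ.IsHermitian) :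
    ((M * Δ).trace).re
      = ∑ i, ((star (hΔ.eigenvectorUnitary : Matrix (Fin d) (Fin d) ℂ) * M *
          (hΔ.eigenvectorUnitary : Matrix (Fin d) (Fin d) ℂ)) i i).re * hΔ.eigenvalues i := by
  set u : Matrix (Fin d) (Fin d) ℂ := ↑hΔ.eigenvectorUnitary with hu
  set e := hΔ.eigenvalues with he
  have hspec : Δ = u * diagonal ((↑) ∘ e) * star u := by
    rw [hu, he]; exact hΔ.spectral_theorem
  have h1 : M * Δ = (M * (u * diagonal ((↑) ∘ e))) * star u := by
    rw [hspec]; simp [mul_assoc]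
  rw [h1, trace_mul_comm]
  have h2 : star u * (M * (u * diagonal ((↑) ∘ e))) = (star u * M * u) * diagonal ((↑) ∘ e) := by
    simp [mul_assoc]
  rw [h2, trace, Complex.re_sum]
  refine Finset.sum_congr rfl fun i _ => ?_
  rw [diag_apply, mul_diagonal]
  simp [Complex.mul_re]

theorem helstrom_bound {d : ℕ} (ρ₀ ρ₁ : Matrix (Fin d) (Fin d) ℂ)
    (h₀ : IsDensity ρ₀) (h₁ : IsDensity ρ₁)
    (π₀ π₁ : ℝ) (hπ₀ : 0 ≤ π₀) (hπ₁ : 0 ≤ π₁) (hsum : π₀ + π₁ = 1) :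
    (∀ M₀ M₁ : Matrix (Fin d) (Fin d) ℂ, M₀.PosSemidef → M₁.PosSemidef →
      M₀ + M₁ = 1 →
      π₀ * (M₁ * ρ₀).trace.re + π₁ * (M₀ * ρ₁).trace.re
        ≥ (1 / 2) * (1 - traceNorm ((π₀ : ℂ) • ρ₀ - (π₁ : ℂ) • ρ₁))) ∧
    (∃ M₀ M₁ : Matrix (Fin d) (Fin d) ℂ, M₀.PosSemidef ∧ M₁.PosSemidef ∧
      M₀ + M₁ = 1 ∧
      π₀ * (M₁ * ρ₀).trace.re + π₁ * (M₀ * ρ₁).trace.re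
        = (1 / 2) * (1 - traceNorm ((π₀ : ℂ) • ρ₀ - (π₁ : ℂ) • ρ₁))) := by
  set Δ : Matrix (Fin d) (Fin d) ℂ := (π₀ : ℂ) • ρ₀ - (π₁ : ℂ) • ρ₁ with hΔdef
  have hΔ : Δ.IsHermitian := by
    rw [hΔdef]
    unfold Matrix.IsHermitian
    rw [conjTranspose_sub, conjTranspose_smul, conjTranspose_smul, h₀.1.1.eq, h₁.1.1.eq]
    simp [Complex.star_def, Complex.conj_ofReal]
  set u : Matrix (Fin d) (Fin d) ℂ := ↑hΔ.eigenvectorUnitary with hu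
  set e := hΔ.eigenvalues with he
  have hu1 : star u * u = 1 := mem_unitaryGroup_iff'.mp hΔ.eigenvectorUnitary.2
  have hu2 : u * star u = 1 := mem_unitaryGroup_iff.mp hΔ.eigenvectorUnitary.2
  have hT : traceNorm Δ = ∑ i, |e i| := traceNorm_herm Δ hΔ
  -- sum of eigenvalues
  have hsum_e : ∑ i, e i = π₀ - π₁ := by
    have h1 := retrace Δ 1 hΔ
    rw [one_mul] at h1
    have h2 : star u * 1 * u = 1 := by rw [mul_one, hu1]
    rw [← hu, ← he, h2] at h1
    simp only [one_apply_eq, Complex.one_re, one_mul] at h1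
    have h3 : Δ.trace.re = π₀ - π₁ := by
      rw [hΔdef, trace_sub, trace_smul, trace_smul, h₀.2, h₁.2]
      simp
    rw [h3] at h1
    linarith [h1]
  -- general rewrite of the error
  have herr : ∀ M₀ M₁ : Matrix (Fin d) (Fin d) ℂ, M₀ + M₁ = 1 →
      π₀ * (M₁ * ρ₀).trace.re + π₁ * (M₀ * ρ₁).trace.re = π₀ - ((M₀ * Δ).trace).re := by
    intro M₀ M₁ hM01
    have hM₁ : M₁ = 1 - M₀ := eq_sub_of_add_eq' hM01
    have ht0 : (M₁ * ρ₀).trace.re = 1 - (M₀ * ρ₀).trace.re := by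
      rw [hM₁, sub_mul, one_mul, trace_sub, Complex.sub_re, h₀.2]
      simp
    have htd : ((M₀ * Δ).trace).re = π₀ * (M₀ * ρ₀).trace.re - π₁ * (M₀ * ρ₁).trace.re := by
      rw [hΔdef, mul_sub, mul_smul_comm, mul_smul_comm, trace_sub, trace_smul, trace_smul]
      simp [Complex.mul_re]
    rw [ht0, htd]; ring
  have hmaxsum : ∑ i, max (e i) 0 = ((π₀ - π₁) + ∑ i, |e i|) / 2 := by
    rw [← hsum_e, ← Finset.sum_add_distrib, Finset.sum_div]
    refine Finset.sum_congr rfl fun i _ => ?_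
    rcases le_or_gt 0 (e i) with h | h
    · rw [max_eq_left h, abs_of_nonneg h]; ring
    · rw [max_eq_right h.le, abs_of_neg h]; ring
  constructor
  · intro M₀ M₁ hM₀ hM₁ hM01
    rw [herr M₀ M₁ hM01, hT, ge_iff_le]
    -- bound Re Tr(M₀ Δ) ≤ ∑ max (e i) 0
    have hkey : ((M₀ * Δ).trace).re ≤ ∑ i, max (e i) 0 := by
      rw [retrace Δ M₀ hΔ, ← hu, ← he]
      set N := star u * M₀ * u with hN
      have hNpsd : N.PosSemidef := by
        rw [hN, Matrix.star_eq_conjTranspose]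
        exact hM₀.conjTranspose_mul_mul_same u
      have h1N : (1 - N).PosSemidef := by
        have h2 : star u * M₁ * u = 1 - N := by
          have hM₁' : M₁ = 1 - M₀ := eq_sub_of_add_eq' hM01
          rw [hM₁', hN, mul_sub, mul_one, sub_mul, hu1]
        rw [← h2, Matrix.star_eq_conjTranspose]
        exact hM₁.conjTranspose_mul_mul_same u
      refine Finset.sum_le_sum fun i _ => ?_
      have hlo : 0 ≤ (N i i).re := psd_diag_re_nonneg hNpsd i
      have hhi : (N i i).re ≤ 1 := by
        have := psd_diag_re_nonneg h1N i
        simp only [Matrix.sub_apply, one_apply_eq, Complex.sub_re, Complex.one_re] at this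
        linarith
      rcases le_or_gt 0 (e i) with h | h
      · calc (N i i).re * e i ≤ 1 * e i := by nlinarith
          _ ≤ max (e i) 0 := by rw [one_mul]; exact le_max_left _ _
      · calc (N i i).re * e i ≤ 0 := by nlinarith
          _ ≤ max (e i) 0 := le_max_right _ _
    rw [hmaxsum] at hkey
    linarith
  · -- optimal POVM
    set D₀ : Matrix (Fin d) (Fin d) ℂ := diagonal (fun i => if 0 ≤ e i then 1 else 0) with hD₀
    set D₁ : Matrix (Fin d) (Fin d) ℂ := diagonal (fun i => if 0 ≤ e i then 0 else 1) with hD₁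
    have hDsum : D₀ + D₁ = 1 := by
      ext i j
      rcases eq_or_ne i j with rfl | hij
      · by_cases h : 0 ≤ e i <;>
          simp [hD₀, hD₁, Matrix.add_apply, diagonal_apply_eq, one_apply_eq, h]
      · simp [hD₀, hD₁, Matrix.add_apply, diagonal_apply_ne _ hij, one_apply_ne hij]
    refine ⟨u * D₀ * star u, u * D₁ * star u, ?_, ?_, ?_, ?_⟩
    · rw [Matrix.star_eq_conjTranspose]
      refine PosSemidef.mul_mul_conjTranspose_same ?_ u
      refine PosSemidef.diagonal fun i => ?_
      by_cases h : 0 ≤ e i <;> simp [h]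
    · rw [Matrix.star_eq_conjTranspose]
      refine PosSemidef.mul_mul_conjTranspose_same ?_ u
      refine PosSemidef.diagonal fun i => ?_
      by_cases h : 0 ≤ e i <;> simp [h]
    · rw [← add_mul, ← mul_add, hDsum, mul_one, hu2]
    · rw [herr _ _ (by rw [← add_mul, ← mul_add, hDsum, mul_one, hu2]), hT]
      have hNval : star u * (u * D₀ * star u) * u = D₀ := by
        rw [← mul_assoc, ← mul_assoc, hu1, one_mul, mul_assoc, hu1, mul_one]
      have hkey : (((u * D₀ * star u) * Δ).trace).re = ∑ i, max (e i) 0 := by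
        rw [retrace Δ _ hΔ, ← hu, ← he, hNval]
        refine Finset.sum_congr rfl fun i _ => ?_
        rw [hD₀, diagonal_apply_eq]
        by_cases h : 0 ≤ e i
        · simp [h, max_eq_left h]
        · simp [h, max_eq_right (le_of_not_ge h)]
      rw [hkey, hmaxsum]
      linear_combination hsum / 2
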